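/- For every n ∈ ℕ with n ≥ 1 and every h ∈ ℂ with Re(h) > 1, the series below converge absolutely and the generalized (h,q)-Bernoulli number attached to χ satisfies β_{n,χ,q}^h = (h−1)(1−q) · Σ_{m=0}^{∞} q^{(h−1)m}·χ(m)·[m]_q^{n} − n · Σ_{m=0}^{∞} q^{hm}·χ(m)·[m]_q^{n−1}, where in the m = 0 term the convention [0]_q^{0} = 1 is used. -/

import Mathlib

open Complex Finset Filter

/-- Complex power `q^z := exp(z·log q)` for a real base `q`. -/
noncomputable def qcpow (q : ℝ) (z : ℂ) : ℂ := Complex.exp (z * (Real.log q : ℂ))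

/-- The complex `q`-number `[z]_q = (1 - q^z)/(1 - q)`. -/
noncomputable def qnum (q : ℝ) (z : ℂ) : ℂ := (1 - qcpow q z) / (1 - (q : ℂ))

/-- The real `q`-number `[y]_q = (1 - q^y)/(1 - q)` for real `y`. -/
noncomputable def qnumR (q : ℝ) (y : ℝ) : ℝ := (1 - Real.exp (y * Real.log q)) / (1 - q)

/-- The `(h,q)`-Bernoulli polynomial
`β_{n,q}^h(x) = (1-q)^{-n} ∑_{l=0}^{n} C(n,l) (-1)^l q^{lx} (l+h-1)/[l+h-1]_q`. -/
noncomputable def qbeta (q : ℝ) (h : ℂ) (n : ℕ) (x : ℝ) : ℂ :=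
  (1 - (q : ℂ))⁻¹ ^ n * ∑ l ∈ Finset.range (n + 1),
    (n.choose l : ℂ) * (-1) ^ l * qcpow q ((l : ℂ) * (x : ℂ)) *
      (((l : ℂ) + h - 1) / qnum q ((l : ℂ) + h - 1))

/-- The generalized `(h,q)`-Bernoulli polynomial attached to a Dirichlet character `χ` mod `f`:
`β_{n,χ,q}^h(x) = [f]_q^{n-1} ∑_{a=0}^{f-1} χ(a) q^{(h-1)a} β_{n,q^f}^h((x+a)/f)`. -/
noncomputable def qbetaChi (q : ℝ) (h : ℂ) (f : ℕ) (χ : DirichletCharacter ℂ f)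
    (n : ℕ) (x : ℝ) : ℂ :=
  qnum q (f : ℂ) ^ ((n : ℤ) - 1) * ∑ a ∈ Finset.range f,
    χ (a : ZMod f) * qcpow q ((h - 1) * (a : ℂ)) * qbeta (q ^ f) h n ((x + a) / f)

/-!
Expanding `(l+h-1)/[l+h-1]_q = (1-q)(l+h-1) ∑ₘ q^{(l+h-1)m}` and summing over `l` first, the
binomial identities `∑ C(n,l)(-t)^l = (1-t)^n`, `∑ C(n,l)(-t)^l l = -n t (1-t)^{n-1}` with
`t = q^{x+m}` and `1 - t = (1-q)[x+m]_q` turn `β_{n,q}^h(x)` into one series in `[x+m]_q`.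
For the base `q^f` at `x = a/f`, since `[a/f + m]_{q^f} = [a+fm]_q / [f]_q` and `χ` has period `f`,
the `m`-th term weighted by `[f]_q^{n-1} χ(a) q^{(h-1)a}` is the term of index `a + fm` of the
`χ`-series, so summing over the residues `a` reassembles the `χ`-series.
-/

lemma qcpow_add (q : ℝ) (z w : ℂ) : qcpow q (z + w) = qcpow q z * qcpow q w := by
  simp only [qcpow, add_mul, Complex.exp_add]

lemma qcpow_natCast_mul (q : ℝ) (m : ℕ) (z : ℂ) : qcpow q (m * z) = qcpow q z ^ m := by
  rw [qcpow, qcpow, mul_assoc, Complex.exp_nat_mul]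

lemma qcpow_pow (q : ℝ) (f : ℕ) (z : ℂ) : qcpow (q ^ f) z = qcpow q (f * z) := by
  simp only [qcpow, Real.log_pow]
  push_cast
  ring_nf

lemma norm_qcpow {q : ℝ} (hq0 : 0 < q) (z : ℂ) : ‖qcpow q z‖ = q ^ z.re := by
  rw [qcpow, Complex.norm_exp, Real.rpow_def_of_pos hq0, mul_comm]
  simp

lemma qcpow_ofReal (q y : ℝ) : qcpow q y = (Real.exp (y * Real.log q) : ℂ) := by
  rw [qcpow, ← Complex.ofReal_mul, Complex.ofReal_exp]

lemma one_sub_qcpow_ofReal {q : ℝ} (hq : q ≠ 1) (y : ℝ) :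
    1 - qcpow q y = (1 - q) * (qnumR q y : ℂ) := by
  have : (1 - q : ℂ) ≠ 0 := sub_ne_zero.2 (mod_cast hq.symm)
  rw [qcpow_ofReal, qnumR]
  push_cast
  field_simp

lemma qnum_natCast {q : ℝ} (f : ℕ) : qnum q f = qnumR q f := by
  rw [qnum, qnumR, ← Complex.ofReal_natCast, qcpow_ofReal]
  push_cast
  rfl

lemma qnumR_natCast_pos {q : ℝ} (hq0 : 0 < q) (hq1 : q < 1) {f : ℕ} (hf : f ≠ 0) :
    0 < qnumR q f := by
  rw [qnumR, Real.exp_nat_mul, Real.exp_log hq0]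
  exact div_pos (sub_pos.2 (pow_lt_one₀ hq0.le hq1 hf)) (sub_pos.2 hq1)

lemma abs_qnumR_le {q : ℝ} (hq0 : 0 < q) (hq1 : q < 1) {y : ℝ} (hy : 0 ≤ y) :
    |qnumR q y| ≤ (1 - q)⁻¹ := by
  have hexp : Real.exp (y * Real.log q) ≤ 1 :=
    Real.exp_le_one_iff.2 (mul_nonpos_of_nonneg_of_nonpos hy (Real.log_neg hq0 hq1).le)
  rw [qnumR, div_eq_mul_inv, abs_mul, abs_of_nonneg (sub_nonneg.2 hexp),
    abs_of_pos (inv_pos.2 (sub_pos.2 hq1))]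
  nlinarith [Real.exp_pos (y * Real.log q), inv_pos.2 (sub_pos.2 hq1)]

lemma one_sub_pow_eq_mul_qnumR {q : ℝ} (hq0 : 0 < q) (hq1 : q ≠ 1) (f : ℕ) :
    1 - q ^ f = (1 - q) * qnumR q f := by
  rw [qnumR, Real.exp_nat_mul, Real.exp_log hq0, mul_div_cancel₀ _ (sub_ne_zero.2 hq1.symm)]

lemma qnumR_pow {q : ℝ} (hq0 : 0 < q) (hq1 : q ≠ 1) {f : ℕ} (hf : f ≠ 0) (y : ℝ) :
    qnumR (q ^ f) y = qnumR q (f * y) / qnumR q f := by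
  have h1 : 1 - q ≠ 0 := sub_ne_zero.2 hq1.symm
  have h2 : 1 - q ^ f ≠ 0 :=
    sub_ne_zero.2 fun h ↦ hq1 ((pow_eq_one_iff_of_nonneg hq0.le hf).1 h.symm)
  rw [qnumR, qnumR, qnumR, Real.exp_nat_mul, Real.exp_log hq0, Real.log_pow, mul_left_comm]
  field_simp

section Binomial

variable {R : Type*} [CommRing R]

lemma sum_range_choose_mul_neg_one_pow_mul_pow (t : R) (n : ℕ) :
    ∑ l ∈ range (n + 1), (n.choose l : R) * (-1) ^ l * t ^ l = (1 - t) ^ n := by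
  rw [sub_eq_neg_add, add_pow]
  refine sum_congr rfl fun l _ ↦ ?_
  rw [one_pow, mul_one, neg_pow]
  ring

lemma sum_range_choose_mul_neg_one_pow_mul_natCast_mul_pow (t : R) (n : ℕ) :
    ∑ l ∈ range (n + 1), (n.choose l : R) * (-1) ^ l * l * t ^ l =
      -(n * t * (1 - t) ^ (n - 1)) := by
  rcases n with _ | n
  · simp
  rw [sum_range_succ', Nat.add_sub_cancel, ← sum_range_choose_mul_neg_one_pow_mul_pow, mul_sum,
    ← sum_neg_distrib]
  simp only [Nat.cast_zero, mul_zero, zero_mul, add_zero]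
  refine sum_congr rfl fun l _ ↦ ?_
  have key : ((n + 1).choose (l + 1) : R) * (l + 1) = (n + 1) * n.choose l := by
    have := congrArg (Nat.cast : ℕ → R) (Nat.add_one_mul_choose_eq n l)
    push_cast at this
    linear_combination -this
  push_cast
  linear_combination (-1) ^ (l + 1) * t ^ (l + 1) * key

lemma sum_range_choose_mul_neg_one_pow_mul_add_mul_pow (c t : R) (n : ℕ) :
    ∑ l ∈ range (n + 1), (n.choose l : R) * (-1) ^ l * (l + c) * t ^ l =
      c * (1 - t) ^ n - n * t * (1 - t) ^ (n - 1) := by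
  calc _ = ∑ l ∈ range (n + 1), (n.choose l : R) * (-1) ^ l * l * t ^ l +
        c * ∑ l ∈ range (n + 1), (n.choose l : R) * (-1) ^ l * t ^ l := by
        rw [mul_sum, ← sum_add_distrib]
        exact sum_congr rfl fun l _ ↦ by ring
    _ = _ := by
      rw [sum_range_choose_mul_neg_one_pow_mul_pow,
        sum_range_choose_mul_neg_one_pow_mul_natCast_mul_pow]
      ring

end Binomial

lemma hasSum_div_qnum {q : ℝ} (hq : q ≠ 1) {w : ℂ} (hw : ‖qcpow q w‖ < 1) :
    HasSum (fun m : ℕ ↦ (1 - q) * w * qcpow q w ^ m) (w / qnum q w) := by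
  have h1 : (1 - q : ℂ) ≠ 0 := sub_ne_zero.2 (mod_cast hq.symm)
  have hw1 : 1 - qcpow q w ≠ 0 := sub_ne_zero.2 fun h ↦ by simp [← h] at hw
  rw [show w / qnum q w = (1 - q) * w * (1 - qcpow q w)⁻¹ by rw [qnum]; field_simp]
  exact (hasSum_geometric_of_norm_lt_one hw).mul_left _

noncomputable def qbetaTerm (q : ℝ) (h : ℂ) (n : ℕ) (x : ℝ) (m : ℕ) : ℂ :=
  qcpow q ((h - 1) * m) *
    ((h - 1) * (1 - q) * (qnumR q (x + m) : ℂ) ^ n -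
      n * qcpow q (x + m) * (qnumR q (x + m) : ℂ) ^ (n - 1))

lemma qbetaTerm_eq_sum {q : ℝ} (hq : q ≠ 1) (h : ℂ) (n : ℕ) (x : ℝ) (m : ℕ) :
    (1 - (q : ℂ))⁻¹ ^ n * ∑ l ∈ range (n + 1),
      (n.choose l : ℂ) * (-1) ^ l * qcpow q (l * x) *
        ((1 - q) * (l + h - 1) * qcpow q (l + h - 1) ^ m) = qbetaTerm q h n x m := by
  have h1 : (1 - q : ℂ) ≠ 0 := sub_ne_zero.2 (mod_cast hq.symm)
  set t := qcpow q (x + m)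
  have hpow : ∀ l : ℕ,
      qcpow q (l * x) * qcpow q (l + h - 1) ^ m = qcpow q ((h - 1) * m) * t ^ l := by
    intro l
    rw [← qcpow_natCast_mul, ← qcpow_natCast_mul, ← qcpow_add, ← qcpow_add]
    ring_nf
  have hsum : ∑ l ∈ range (n + 1), (n.choose l : ℂ) * (-1) ^ l * qcpow q (l * x) *
      ((1 - q) * (l + h - 1) * qcpow q (l + h - 1) ^ m) = (1 - q) * qcpow q ((h - 1) * m) *
      ((h - 1) * (1 - t) ^ n - n * t * (1 - t) ^ (n - 1)) := by
    rw [← sum_range_choose_mul_neg_one_pow_mul_add_mul_pow, mul_sum]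
    refine sum_congr rfl fun l _ ↦ ?_
    linear_combination (n.choose l : ℂ) * (-1) ^ l * (1 - q) * (l + h - 1) * hpow l
  have ht : 1 - t = (1 - q) * (qnumR q (x + m) : ℂ) := by
    rw [← one_sub_qcpow_ofReal hq]
    push_cast
    rfl
  rw [hsum, ht, qbetaTerm]
  rcases n with _ | n
  · simp only [pow_zero, Nat.cast_zero, zero_mul, sub_zero, one_mul, mul_one]
    ring
  · have e : (1 - (q : ℂ))⁻¹ ^ (n + 1) * (1 - q) ^ (n + 1) = 1 := by
      rw [← mul_pow, inv_mul_cancel₀ h1, one_pow]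
    simp only [Nat.add_sub_cancel, mul_pow]
    linear_combination qcpow q ((h - 1) * m) *
      ((h - 1) * (1 - q) * (qnumR q (x + m) : ℂ) ^ (n + 1) -
        (n + 1 : ℕ) * t * (qnumR q (x + m) : ℂ) ^ n) * e

lemma hasSum_qbetaTerm {q : ℝ} (hq0 : 0 < q) (hq1 : q < 1) {h : ℂ} (hh : 1 < h.re)
    (n : ℕ) (x : ℝ) :
    HasSum (qbetaTerm q h n x) (qbeta q h n x) := by
  have hnorm : ∀ l : ℕ, ‖qcpow q (l + h - 1)‖ < 1 := fun l ↦ by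
    rw [norm_qcpow hq0]
    exact Real.rpow_lt_one hq0.le hq1 (by
      simp only [Complex.sub_re, Complex.add_re, Complex.natCast_re, Complex.one_re]
      linarith [l.cast_nonneg (α := ℝ)])
  have hl := fun l (_ : l ∈ range (n + 1)) ↦
    (hasSum_div_qnum hq1.ne (hnorm l)).mul_left ((n.choose l : ℂ) * (-1) ^ l * qcpow q (l * x))
  have key := (hasSum_sum hl).mul_left ((1 - (q : ℂ))⁻¹ ^ n)
  simp only [qbetaTerm_eq_sum hq1.ne] at key
  exact key

lemma summable_qcpow_mul_mul_qnumR_pow {q : ℝ} (hq0 : 0 < q) (hq1 : q < 1) {z : ℂ}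
    (hz : 0 < z.re) {c : ℕ → ℂ} (hc : ∀ m, ‖c m‖ ≤ 1) (k : ℕ) :
    Summable fun m : ℕ ↦ qcpow q (z * m) * c m * (qnumR q m : ℂ) ^ k := by
  have hr : q ^ z.re < 1 := Real.rpow_lt_one hq0.le hq1 hz
  refine .of_norm_bounded
    ((summable_geometric_of_lt_one (by positivity) hr).mul_right ((1 - q)⁻¹ ^ k)) fun m ↦ ?_
  rw [norm_mul, norm_mul, mul_comm z, qcpow_natCast_mul, norm_pow, norm_qcpow hq0, norm_pow,
    Complex.norm_real, Real.norm_eq_abs]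
  calc _ ≤ (q ^ z.re) ^ m * 1 * (1 - q)⁻¹ ^ k := by
        gcongr
        exacts [hc m, abs_qnumR_le hq0 hq1 m.cast_nonneg]
    _ = _ := by rw [mul_one]

lemma tsum_eq_sum_range_tsum_add_mul {M : Type*} [AddCommGroup M] [UniformSpace M]
    [IsUniformAddGroup M] [CompleteSpace M] [T0Space M] {F : ℕ → M} (hF : Summable F)
    (N : ℕ) [NeZero N] : ∑' n, F n = ∑ a ∈ range N, ∑' m, F (a + N * m) := by
  rw [Nat.sumByResidueClasses hF N]
  obtain ⟨k, rfl⟩ := Nat.exists_eq_succ_of_ne_zero (NeZero.ne N)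
  exact Fin.sum_univ_eq_sum_range (fun a ↦ ∑' m, F (a + (k + 1) * m)) (k + 1)

lemma qnum_zpow_mul_qbetaTerm_pow {q : ℝ} (hq0 : 0 < q) (hq1 : q < 1) {f : ℕ} (hf : f ≠ 0)
    (χ : DirichletCharacter ℂ f) (h : ℂ) (n a m : ℕ) :
    qnum q f ^ ((n : ℤ) - 1) * (χ a * qcpow q ((h - 1) * a) * qbetaTerm (q ^ f) h n (a / f) m) =
      (h - 1) * (1 - q) * (qcpow q ((h - 1) * ((a + f * m : ℕ) : ℂ)) * χ (a + f * m : ℕ) *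
        (qnumR q (a + f * m : ℕ) : ℂ) ^ n) -
      n * (qcpow q (h * ((a + f * m : ℕ) : ℂ)) * χ (a + f * m : ℕ) *
        (qnumR q (a + f * m : ℕ) : ℂ) ^ (n - 1)) := by
  have hF : (qnumR q f : ℂ) ≠ 0 := mod_cast (qnumR_natCast_pos hq0 hq1 hf).ne'
  have hfR : (f : ℝ) ≠ 0 := mod_cast hf
  have hχ : χ (a + f * m : ℕ) = χ a := by simp
  have hQ : qnumR (q ^ f) (a / f + m) = qnumR q (a + f * m : ℕ) / qnumR q f := by
    rw [qnumR_pow hq0 hq1.ne hf]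
    push_cast
    field_simp
  have hpow₁ : qcpow q ((h - 1) * a) * qcpow (q ^ f) ((h - 1) * m) =
      qcpow q ((h - 1) * ((a + f * m : ℕ) : ℂ)) := by
    rw [qcpow_pow, ← qcpow_add]
    push_cast
    ring_nf
  have hpow₂ : qcpow q ((h - 1) * ((a + f * m : ℕ) : ℂ)) * qcpow (q ^ f) ((a / f : ℝ) + m) =
      qcpow q (h * ((a + f * m : ℕ) : ℂ)) := by
    rw [qcpow_pow, ← qcpow_add]
    push_cast
    field_simp
    ring_nf
  have hqf : 1 - ((q ^ f : ℝ) : ℂ) = (1 - q) * qnumR q f := by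
    exact_mod_cast one_sub_pow_eq_mul_qnumR hq0 hq1.ne f
  rw [qbetaTerm, hQ, hqf, qnum_natCast, hχ, ← hpow₂, ← hpow₁]
  push_cast
  -- for `n = 0` the exponent `(n : ℤ) - 1` is `-1` while `n - 1 = 0` in `ℕ`
  rcases n with _ | n
  · simp only [Nat.cast_zero, zero_sub, zpow_neg_one, pow_zero, zero_mul, sub_zero, mul_one]
    field_simp
  · simp only [Nat.cast_add_one, add_sub_cancel_right, Nat.add_sub_cancel, zpow_natCast, div_pow]
    field_simp
    ring

theorem qbetaChi_number_eq_tsum_general (q : ℝ) (hq0 : 0 < q) (hq1 : q < 1)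
    (h : ℂ) (hh : 1 < h.re) (f : ℕ) (hf : 1 ≤ f) (χ : DirichletCharacter ℂ f)
    (n : ℕ) :
    Summable (fun m : ℕ => qcpow q ((h - 1) * (m : ℂ)) * χ (m : ZMod f) *
      ((qnumR q (m : ℝ) : ℂ) ^ n)) ∧
    Summable (fun m : ℕ => qcpow q (h * (m : ℂ)) * χ (m : ZMod f) *
      ((qnumR q (m : ℝ) : ℂ) ^ (n - 1))) ∧
    qbetaChi q h f χ n 0 =
      (h - 1) * (1 - (q : ℂ)) *
        (∑' m : ℕ, qcpow q ((h - 1) * (m : ℂ)) * χ (m : ZMod f) * ((qnumR q (m : ℝ) : ℂ) ^ n)) -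
      (n : ℂ) *
        ∑' m : ℕ, qcpow q (h * (m : ℂ)) * χ (m : ZMod f) * ((qnumR q (m : ℝ) : ℂ) ^ (n - 1)) := by
  have hf0 : f ≠ 0 := Nat.one_le_iff_ne_zero.1 hf
  have : NeZero f := ⟨hf0⟩
  have hS₁ := summable_qcpow_mul_mul_qnumR_pow hq0 hq1 (z := h - 1) (by simpa using hh)
    (fun m ↦ χ.norm_le_one m) n
  have hS₂ := summable_qcpow_mul_mul_qnumR_pow hq0 hq1 (z := h) (by linarith)
    (fun m ↦ χ.norm_le_one m) (n - 1)
  refine ⟨hS₁, hS₂, ?_⟩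
  rw [← tsum_mul_left, ← tsum_mul_left, ← (hS₁.mul_left _).tsum_sub (hS₂.mul_left _),
    tsum_eq_sum_range_tsum_add_mul ((hS₁.mul_left _).sub (hS₂.mul_left _)) f, qbetaChi,
    mul_sum]
  refine sum_congr rfl fun a _ ↦ ?_
  have hqf := hasSum_qbetaTerm (pow_pos hq0 f) (pow_lt_one₀ hq0.le hq1 hf0) hh n (a / f)
  rw [zero_add, ← hqf.tsum_eq, ← tsum_mul_left, ← tsum_mul_left]
  exact tsum_congr (qnum_zpow_mul_qbetaTerm_pow hq0 hq1 hf0 χ h n a)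

/-- series representation of the generalized `(h,q)`-Bernoulli number
`β_{n,χ,q}^h = β_{n,χ,q}^h(0)` for `n ≥ 1` (with the convention `[0]_q^0 = 1`). -/
theorem qbetaChi_number_eq_tsum (q : ℝ) (hq0 : 0 < q) (hq1 : q < 1)
    (h : ℂ) (hh : 1 < h.re) (f : ℕ) (hf : 1 ≤ f) (χ : DirichletCharacter ℂ f)
    (n : ℕ) (hn : 1 ≤ n) :
    Summable (fun m : ℕ => qcpow q ((h - 1) * (m : ℂ)) * χ (m : ZMod f) *
      ((qnumR q (m : ℝ) : ℂ) ^ n)) ∧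
    Summable (fun m : ℕ => qcpow q (h * (m : ℂ)) * χ (m : ZMod f) *
      ((qnumR q (m : ℝ) : ℂ) ^ (n - 1))) ∧
    qbetaChi q h f χ n 0 =
      (h - 1) * (1 - (q : ℂ)) *
        (∑' m : ℕ, qcpow q ((h - 1) * (m : ℂ)) * χ (m : ZMod f) * ((qnumR q (m : ℝ) : ℂ) ^ n)) -
      (n : ℂ) *
        ∑' m : ℕ, qcpow q (h * (m : ℂ)) * χ (m : ZMod f) * ((qnumR q (m : ℝ) : ℂ) ^ (n - 1)) :=
  qbetaChi_number_eq_tsum_general q hq0 hq1 h hh f hf χ n
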